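/- For every real η > 0, every integer n ≥ 2, and every s ∈ S_n⁺, the exponential moment E[ exp( s·Σ_{i=1}^{n−1} (U_i·Z_{i+1} − η·U_i²) ) ] is finite and equals exp( −(1/2) Σ_{ℓ=1}^{n−1} log(1 − 2σ²α_ℓ) ) = ∏_{ℓ=1}^{n−1} (1 − 2σ²α_ℓ)^{−1/2}. -/

import Mathlib

/-!
Write `S_k = ∑_{i<k} (U_i Z_{i+1} - η U_i²)` (the `i = 0` term vanishes) and consider the
tilted moments `E[exp(s S_k + β U_k²)]`. Since `(S_k, U_k)` is a function of `Z_1, …, Z_k` and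
`Z_{k+1} ~ N(0, σ²)` is independent of it, integrating out `Z_{k+1}` is a Gaussian integral of
`exp(β z² + c z)`, which equals `(1 - 2σ²β)^{-1/2} exp(σ²c²/(2(1 - 2σ²β)))`. This gives
`E[exp(s S_{k+1} + β U_{k+1}²)] = (1 - 2σ²β)^{-1/2} E[exp(s S_k + T(β) U_k²)]`, where
`T = alphaStep` is the map with `α_{ℓ+1} = T(α_ℓ)`. Starting from `β = α₀ = 0` and iterating
`n` times down to `S_0 = U_0 = 0` produces the product `∏_{ℓ<n} (1 - 2σ²α_ℓ)^{-1/2}`, whose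
`ℓ = 0` factor is `1`. The computation is carried out for lower integrals, so that integrability
comes for free.
-/

open MeasureTheory ProbabilityTheory Finset

/-- The sequence `α_ℓ` from the paper: `α₁ = (σ²s² − 2ηs)/2` and
`α_ℓ = ([a² + 2σ²s(a+η)]·α_{ℓ−1} + α₁)/(1 − 2σ²α_{ℓ−1})` for `ℓ ≥ 2`. -/
noncomputable def alphaSeq (a σ η s : ℝ) : ℕ → ℝ
  | 0 => 0
  | 1 => (σ ^ 2 * s ^ 2 - 2 * η * s) / 2
  | (ℓ + 2) =>
      ((a ^ 2 + 2 * σ ^ 2 * s * (a + η)) * alphaSeq a σ η s (ℓ + 1)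
            + (σ ^ 2 * s ^ 2 - 2 * η * s) / 2)
        / (1 - 2 * σ ^ 2 * alphaSeq a σ η s (ℓ + 1))

/-- The set `S_n⁺ = {s > 0 : α_ℓ < 1/(2σ²) for all 1 ≤ ℓ ≤ n}`. -/
def Splus (a σ η : ℝ) (n : ℕ) : Set ℝ :=
  {s : ℝ | 0 < s ∧ ∀ ℓ ∈ Finset.Icc 1 n, alphaSeq a σ η s ℓ < 1 / (2 * σ ^ 2)}

open Real
open scoped ENNReal NNReal

@[to_additive]
lemma Finset.prod_range_eq_prod_Icc_pred {M : Type*} [CommMonoid M] {f : ℕ → M}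
    (hf : f 0 = 1) (n : ℕ) : ∏ i ∈ range n, f i = ∏ i ∈ Icc 1 (n - 1), f i := by
  rcases n.eq_zero_or_pos with rfl | hn
  · simp
  rw [range_eq_Ico, prod_eq_prod_Ico_succ_bot hn, hf, one_mul]
  rfl

lemma integrable_and_integral_eq_of_lintegral_ofReal_eq {α : Type*} [MeasurableSpace α]
    {μ : Measure α} {f : α → ℝ} (hf : 0 ≤ᵐ[μ] f) (hfm : AEStronglyMeasurable f μ) {c : ℝ}
    (hc : 0 ≤ c) (h : ∫⁻ x, ENNReal.ofReal (f x) ∂μ = ENNReal.ofReal c) :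
    Integrable f μ ∧ ∫ x, f x ∂μ = c :=
  ⟨⟨hfm, (hasFiniteIntegral_iff_ofReal hf).2 (h ▸ ENNReal.ofReal_lt_top)⟩,
    by rw [integral_eq_lintegral_of_nonneg_ae hf hfm, h, ENNReal.toReal_ofReal hc]⟩

lemma gaussianPDFReal_mul_exp_quadratic {v : ℝ≥0} (hv : v ≠ 0) {β : ℝ} (hβ : 2 * v * β < 1)
    (c x : ℝ) :
    gaussianPDFReal 0 v x * exp (β * x ^ 2 + c * x) =
      (1 - 2 * v * β) ^ (-(1 / 2 : ℝ)) * exp (v * c ^ 2 / (2 * (1 - 2 * v * β))) *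
        gaussianPDFReal (v * c / (1 - 2 * v * β)) (v / (1 - 2 * v * β).toNNReal) x := by
  have hD : 0 < 1 - 2 * v * β := by linarith
  have hexp : -(x - 0) ^ 2 / (2 * v) + (β * x ^ 2 + c * x) =
      v * c ^ 2 / (2 * (1 - 2 * v * β)) +
        -(x - v * c / (1 - 2 * v * β)) ^ 2 / (2 * (v / (1 - 2 * v * β))) := by
    field_simp
    ring
  simp only [gaussianPDFReal, NNReal.coe_div, Real.coe_toNNReal _ hD.le]
  rw [Real.rpow_neg hD.le, ← Real.sqrt_eq_rpow, mul_div_assoc', Real.sqrt_div' _ hD.le,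
    mul_assoc, ← exp_add, hexp, exp_add]
  field_simp

lemma lintegral_exp_quadratic_gaussianReal {v : ℝ≥0} {β : ℝ} (hβ : 2 * v * β < 1) (c : ℝ) :
    ∫⁻ x, ENNReal.ofReal (exp (β * x ^ 2 + c * x)) ∂gaussianReal 0 v =
      ENNReal.ofReal ((1 - 2 * v * β) ^ (-(1 / 2 : ℝ)) *
        exp (v * c ^ 2 / (2 * (1 - 2 * v * β)))) := by
  rcases eq_or_ne v 0 with rfl | hv
  · simp
  have hD : 0 < 1 - 2 * v * β := by linarith
  have hv' : v / (1 - 2 * v * β).toNNReal ≠ 0 := by simp [hv, hβ]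
  rw [gaussianReal_of_var_ne_zero 0 hv,
    lintegral_withDensity_eq_lintegral_mul _ (measurable_gaussianPDF 0 v) (by fun_prop)]
  simp_rw [Pi.mul_apply, gaussianPDF, ← ENNReal.ofReal_mul (gaussianPDFReal_nonneg _ _ _),
    gaussianPDFReal_mul_exp_quadratic hv hβ,
    ENNReal.ofReal_mul (mul_nonneg (rpow_nonneg hD.le _) (exp_pos _).le)]
  rw [lintegral_const_mul _ (by fun_prop), lintegral_gaussianPDFReal_eq_one _ hv', mul_one]

theorem ProbabilityTheory.IndepFun.lintegral_comp_prodMk {Ω α β : Type*} [MeasurableSpace Ω]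
    [MeasurableSpace α] [MeasurableSpace β] {μ : Measure Ω} [IsFiniteMeasure μ]
    {X : Ω → α} {Y : Ω → β} (hXY : IndepFun X Y μ) (hX : Measurable X) (hY : Measurable Y)
    {f : α × β → ℝ≥0∞} (hf : Measurable f) :
    ∫⁻ ω, f (X ω, Y ω) ∂μ = ∫⁻ ω, ∫⁻ y, f (X ω, y) ∂μ.map Y ∂μ := by
  calc ∫⁻ ω, f (X ω, Y ω) ∂μ = ∫⁻ p, f p ∂μ.map fun ω => (X ω, Y ω) :=
        (lintegral_map hf (hX.prodMk hY)).symm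
    _ = ∫⁻ p, f p ∂(μ.map X).prod (μ.map Y) := by
        rw [(indepFun_iff_map_prod_eq_prod_map_map hX.aemeasurable hY.aemeasurable).mp hXY]
    _ = ∫⁻ x, ∫⁻ y, f (x, y) ∂μ.map Y ∂μ.map X := lintegral_prod _ hf.aemeasurable
    _ = ∫⁻ ω, ∫⁻ y, f (X ω, y) ∂μ.map Y ∂μ := lintegral_map hf.lintegral_prod_right' hX

theorem ProbabilityTheory.iIndepFun.indepFun_of_measurable_natural {Ω ι β γ : Type*}
    [MeasurableSpace Ω] [LinearOrder ι] [TopologicalSpace β] [TopologicalSpace.MetrizableSpace β]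
    [MeasurableSpace β] [BorelSpace β] [MeasurableSpace γ] {μ : Measure Ω} {Z : ι → Ω → β}
    (hZ : iIndepFun Z μ) (hZm : ∀ i, StronglyMeasurable (Z i)) {W : Ω → γ} {k i : ι}
    (hW : Measurable[Filtration.natural Z hZm k] W) (hki : k < i) : IndepFun W (Z i) μ := by
  have h := indep_iSup_of_disjoint (fun j => (hZm j).measurable.comap_le) hZ.iIndep
    (S := Set.Iic k) (T := {i}) (by simpa using hki)
  rw [_root_.iSup_singleton] at h
  exact (IndepFun_iff_Indep _ _ _).mpr (indep_of_indep_of_le_left h hW.comap_le)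

lemma adapted_natural_of_eq_add {Ω : Type*} [MeasurableSpace Ω] {a : ℝ} {Z U : ℕ → Ω → ℝ}
    (hZm : ∀ i, StronglyMeasurable (Z i)) (hU0 : U 0 = fun _ => 0)
    (hU : ∀ i, U (i + 1) = fun ω => a * U i ω + Z (i + 1) ω) :
    Adapted (Filtration.natural Z hZm) U := by
  intro i
  induction i with
  | zero => rw [hU0]; exact measurable_const
  | succ i ih =>
    rw [hU i]
    exact ((ih.mono ((Filtration.natural Z hZm).mono i.le_succ) le_rfl).const_mul a).add
      (Filtration.stronglyAdapted_natural hZm (i + 1)).measurable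

noncomputable def alphaStep (a σ η s β : ℝ) : ℝ :=
  ((a ^ 2 + 2 * σ ^ 2 * s * (a + η)) * β + (σ ^ 2 * s ^ 2 - 2 * η * s) / 2) / (1 - 2 * σ ^ 2 * β)

lemma alphaSeq_succ (a σ η s : ℝ) (ℓ : ℕ) :
    alphaSeq a σ η s (ℓ + 1) = alphaStep a σ η s (alphaSeq a σ η s ℓ) := by
  cases ℓ <;> simp [alphaSeq, alphaStep]

lemma two_mul_sq_mul_alphaSeq_lt_one {a σ η s : ℝ} (hσ : 0 < σ) {n : ℕ} (hs : s ∈ Splus a σ η n)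
    {j : ℕ} (hj : j ≤ n) : 2 * σ ^ 2 * alphaSeq a σ η s j < 1 := by
  rcases j.eq_zero_or_pos with rfl | hj0
  · simp [alphaSeq]
  · have := hs.2 j (mem_Icc.mpr ⟨hj0, hj⟩)
    rwa [lt_div_iff₀ (by positivity), mul_comm] at this

lemma alphaStep_eq {a σ η s β : ℝ} (hβ : 2 * σ ^ 2 * β < 1) :
    β * a ^ 2 - s * η + σ ^ 2 * (s + 2 * a * β) ^ 2 / (2 * (1 - 2 * σ ^ 2 * β)) =
      alphaStep a σ η s β := by
  have hD : 1 - 2 * σ ^ 2 * β ≠ 0 := by linarith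
  have h2D : 2 * (1 - 2 * σ ^ 2 * β) ≠ 0 := mul_ne_zero two_ne_zero hD
  rw [alphaStep, add_div' _ _ _ h2D, div_eq_div_iff h2D hD]
  ring

lemma lintegral_exp_step_gaussianReal (a σ η s : ℝ) {β : ℝ} (hβ : 2 * σ ^ 2 * β < 1)
    (t u : ℝ) :
    ∫⁻ z, ENNReal.ofReal (exp (t + s * (u * z - η * u ^ 2) + β * (a * u + z) ^ 2))
        ∂gaussianReal 0 ⟨σ ^ 2, sq_nonneg σ⟩ =
      ENNReal.ofReal ((1 - 2 * σ ^ 2 * β) ^ (-(1 / 2 : ℝ))) *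
        ENNReal.ofReal (exp (t + alphaStep a σ η s β * u ^ 2)) := by
  have hsplit : ∀ z, exp (t + s * (u * z - η * u ^ 2) + β * (a * u + z) ^ 2) =
      exp (t + (β * a ^ 2 - s * η) * u ^ 2) * exp (β * z ^ 2 + (s + 2 * a * β) * u * z) := by
    intro z
    rw [← exp_add]
    congr 1
    ring
  -- stated with `σ ^ 2` in place of the coercion of `⟨σ ^ 2, _⟩`, which `rw` cannot see through
  have hgauss : ∫⁻ z, ENNReal.ofReal (exp (β * z ^ 2 + (s + 2 * a * β) * u * z))
      ∂gaussianReal 0 ⟨σ ^ 2, sq_nonneg σ⟩ = ENNReal.ofReal ((1 - 2 * σ ^ 2 * β) ^ (-(1 / 2 : ℝ))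
        * exp (σ ^ 2 * ((s + 2 * a * β) * u) ^ 2 / (2 * (1 - 2 * σ ^ 2 * β)))) :=
    lintegral_exp_quadratic_gaussianReal hβ _
  simp_rw [hsplit, ENNReal.ofReal_mul (exp_pos _).le]
  rw [lintegral_const_mul _ (by fun_prop), hgauss, ← ENNReal.ofReal_mul (exp_pos _).le,
    ← ENNReal.ofReal_mul (rpow_nonneg (by linarith) _), mul_left_comm, ← exp_add,
    ← alphaStep_eq hβ]
  congr 3
  ring

section GaussMarkov

variable {Ω : Type*} [MeasurableSpace Ω] {μ : Measure Ω} [IsProbabilityMeasure μ]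
  {a σ η s : ℝ} {Z U : ℕ → Ω → ℝ}

lemma lintegral_exp_gaussMarkov_succ (hZm : ∀ i, Measurable (Z i)) (hZ : iIndepFun Z μ)
    (hZlaw : ∀ i, μ.map (Z i) = gaussianReal 0 ⟨σ ^ 2, sq_nonneg σ⟩)
    (hU0 : U 0 = fun _ => 0) (hU : ∀ i, U (i + 1) = fun ω => a * U i ω + Z (i + 1) ω)
    (k : ℕ) {β : ℝ} (hβ : 2 * σ ^ 2 * β < 1) :
    ∫⁻ ω, ENNReal.ofReal (exp (s * ∑ i ∈ range (k + 1), (U i ω * Z (i + 1) ω - η * U i ω ^ 2)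
        + β * U (k + 1) ω ^ 2)) ∂μ =
      ENNReal.ofReal ((1 - 2 * σ ^ 2 * β) ^ (-(1 / 2 : ℝ))) *
        ∫⁻ ω, ENNReal.ofReal (exp (s * ∑ i ∈ range k, (U i ω * Z (i + 1) ω - η * U i ω ^ 2)
          + alphaStep a σ η s β * U k ω ^ 2)) ∂μ := by
  set ℱ := Filtration.natural Z fun i => (hZm i).stronglyMeasurable
  have hUℱ : Adapted ℱ U := adapted_natural_of_eq_add _ hU0 hU
  have hZℱ : Adapted ℱ Z := fun i =>
    (Filtration.stronglyAdapted_natural (fun i => (hZm i).stronglyMeasurable) i).measurable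
  have hle : ∀ {i j}, i ≤ j → ∀ {X : ℕ → Ω → ℝ}, Adapted ℱ X → Measurable[ℱ j] (X i) :=
    fun hij _ hX => (hX _).mono (ℱ.mono hij) le_rfl
  let W : Ω → ℝ × ℝ := fun ω =>
    (s * ∑ i ∈ range k, (U i ω * Z (i + 1) ω - η * U i ω ^ 2), U k ω)
  have hWℱ : Measurable[ℱ k] W := by
    refine Measurable.prodMk (Measurable.const_mul (Finset.measurable_sum _ fun i hi => ?_) s)
      (hUℱ k)
    have hik : i < k := mem_range.mp hi
    exact ((hle hik.le hUℱ).mul (hle hik hZℱ)).sub (((hle hik.le hUℱ).pow_const 2).const_mul η)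
  have hind : IndepFun W (Z (k + 1)) μ := hZ.indepFun_of_measurable_natural _ hWℱ k.lt_succ_self
  have hW : Measurable W := hWℱ.mono (ℱ.le k) le_rfl
  calc _ = ∫⁻ ω, ENNReal.ofReal (exp ((W ω).1 + s * ((W ω).2 * Z (k + 1) ω - η * (W ω).2 ^ 2)
          + β * (a * (W ω).2 + Z (k + 1) ω) ^ 2)) ∂μ := by
        refine lintegral_congr fun ω => ?_
        rw [sum_range_succ, hU k]
        congr 2
        ring
    _ = ∫⁻ ω, ∫⁻ z, ENNReal.ofReal (exp ((W ω).1 + s * ((W ω).2 * z - η * (W ω).2 ^ 2)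
          + β * (a * (W ω).2 + z) ^ 2)) ∂μ.map (Z (k + 1)) ∂μ :=
        hind.lintegral_comp_prodMk hW (hZm _) (f := fun p => ENNReal.ofReal (exp (p.1.1
          + s * (p.1.2 * p.2 - η * p.1.2 ^ 2) + β * (a * p.1.2 + p.2) ^ 2))) (by fun_prop)
    _ = ∫⁻ ω, ENNReal.ofReal ((1 - 2 * σ ^ 2 * β) ^ (-(1 / 2 : ℝ))) *
          ENNReal.ofReal (exp ((W ω).1 + alphaStep a σ η s β * (W ω).2 ^ 2)) ∂μ := by
        simp_rw [hZlaw, lintegral_exp_step_gaussianReal a σ η s hβ]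
    _ = _ := lintegral_const_mul _ (by fun_prop)

lemma lintegral_exp_gaussMarkov_eq_prod (hZm : ∀ i, Measurable (Z i)) (hZ : iIndepFun Z μ)
    (hZlaw : ∀ i, μ.map (Z i) = gaussianReal 0 ⟨σ ^ 2, sq_nonneg σ⟩)
    (hU0 : U 0 = fun _ => 0) (hU : ∀ i, U (i + 1) = fun ω => a * U i ω + Z (i + 1) ω)
    (k : ℕ) (β : ℕ → ℝ) (hβ : ∀ j, β (j + 1) = alphaStep a σ η s (β j))
    (hβk : ∀ j < k, 2 * σ ^ 2 * β j < 1) :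
    ∫⁻ ω, ENNReal.ofReal (exp (s * ∑ i ∈ range k, (U i ω * Z (i + 1) ω - η * U i ω ^ 2)
        + β 0 * U k ω ^ 2)) ∂μ =
      ENNReal.ofReal (∏ j ∈ range k, (1 - 2 * σ ^ 2 * β j) ^ (-(1 / 2 : ℝ))) := by
  induction k generalizing β with
  | zero => simp [hU0]
  | succ k ih =>
    rw [lintegral_exp_gaussMarkov_succ hZm hZ hZlaw hU0 hU k (hβk 0 k.succ_pos), ← hβ 0,
      ih (fun j => β (j + 1)) (fun j => hβ (j + 1)) (fun j hj => hβk (j + 1) (by omega)),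
      prod_range_succ', ← ENNReal.ofReal_mul (rpow_nonneg (by linarith [hβk 0 k.succ_pos]) _),
      mul_comm]

end GaussMarkov

theorem statement2_general
    {Ω : Type*} [MeasurableSpace Ω] (μ : Measure Ω) [IsProbabilityMeasure μ]
    (a σ : ℝ) (hσ : 0 < σ)
    (Z : ℕ → Ω → ℝ) (hZmeas : ∀ i, Measurable (Z i))
    (hZindep : iIndepFun Z μ)
    (hZlaw : ∀ i, Measure.map (Z i) μ = gaussianReal 0 ⟨σ ^ 2, sq_nonneg σ⟩)
    (U : ℕ → Ω → ℝ) (hU0 : U 0 = fun _ => 0)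
    (hU : ∀ i, U (i + 1) = fun ω => a * U i ω + Z (i + 1) ω)
    (η : ℝ) (n : ℕ)
    (s : ℝ) (hs : s ∈ Splus a σ η n) :
    Integrable
        (fun ω => Real.exp (s * ∑ i ∈ Finset.Icc 1 (n - 1),
          (U i ω * Z (i + 1) ω - η * (U i ω) ^ 2))) μ ∧
      ∫ ω, Real.exp (s * ∑ i ∈ Finset.Icc 1 (n - 1),
          (U i ω * Z (i + 1) ω - η * (U i ω) ^ 2)) ∂μ
        = Real.exp (-(1 / 2 : ℝ) * ∑ ℓ ∈ Finset.Icc 1 (n - 1),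
            Real.log (1 - 2 * σ ^ 2 * alphaSeq a σ η s ℓ)) ∧
      ∫ ω, Real.exp (s * ∑ i ∈ Finset.Icc 1 (n - 1),
          (U i ω * Z (i + 1) ω - η * (U i ω) ^ 2)) ∂μ
        = ∏ ℓ ∈ Finset.Icc 1 (n - 1),
            (1 - 2 * σ ^ 2 * alphaSeq a σ η s ℓ) ^ (-(1 / 2 : ℝ)) := by
  have hUm : ∀ i, Measurable (U i) := fun i =>
    (adapted_natural_of_eq_add (fun i => (hZmeas i).stronglyMeasurable) hU0 hU i).mono
      (Filtration.le _ i) le_rfl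
  have hα : ∀ j < n, 2 * σ ^ 2 * alphaSeq a σ η s j < 1 := fun j hj =>
    two_mul_sq_mul_alphaSeq_lt_one hσ hs hj.le
  have hD : ∀ ℓ ∈ Icc 1 (n - 1), 0 < 1 - 2 * σ ^ 2 * alphaSeq a σ η s ℓ := fun ℓ hℓ =>
    sub_pos.mpr (hα ℓ (by simp only [mem_Icc] at hℓ; omega))
  have hlin := lintegral_exp_gaussMarkov_eq_prod hZmeas hZindep hZlaw hU0 hU n _
    (alphaSeq_succ a σ η s) hα
  have hsum : ∀ ω, ∑ i ∈ range n, (U i ω * Z (i + 1) ω - η * U i ω ^ 2) =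
      ∑ i ∈ Icc 1 (n - 1), (U i ω * Z (i + 1) ω - η * U i ω ^ 2) := fun ω =>
    sum_range_eq_sum_Icc_pred (by simp [hU0]) n
  simp only [show alphaSeq a σ η s 0 = 0 from rfl, zero_mul, add_zero, hsum] at hlin
  rw [prod_range_eq_prod_Icc_pred (by simp [alphaSeq])] at hlin
  obtain ⟨hint, hval⟩ := integrable_and_integral_eq_of_lintegral_ofReal_eq
    (ae_of_all _ fun ω => (exp_pos _).le) (by fun_prop)
    (prod_nonneg fun ℓ hℓ => rpow_nonneg (hD ℓ hℓ).le _) hlin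
  refine ⟨hint, ?_, hval⟩
  rw [hval, mul_sum, exp_sum]
  exact prod_congr rfl fun ℓ hℓ => by rw [rpow_def_of_pos (hD ℓ hℓ), mul_comm]

theorem statement2
    {Ω : Type*} [MeasurableSpace Ω] (μ : Measure Ω) [IsProbabilityMeasure μ]
    (a σ : ℝ) (ha : 1 < a) (hσ : 0 < σ)
    (Z : ℕ → Ω → ℝ) (hZmeas : ∀ i, Measurable (Z i))
    (hZindep : iIndepFun Z μ)
    (hZlaw : ∀ i, Measure.map (Z i) μ = gaussianReal 0 ⟨σ ^ 2, sq_nonneg σ⟩)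
    (U : ℕ → Ω → ℝ) (hU0 : U 0 = fun _ => 0)
    (hU : ∀ i, U (i + 1) = fun ω => a * U i ω + Z (i + 1) ω)
    (η : ℝ) (hη : 0 < η) (n : ℕ) (hn : 2 ≤ n)
    (s : ℝ) (hs : s ∈ Splus a σ η n) :
    Integrable
        (fun ω => Real.exp (s * ∑ i ∈ Finset.Icc 1 (n - 1),
          (U i ω * Z (i + 1) ω - η * (U i ω) ^ 2))) μ ∧
      ∫ ω, Real.exp (s * ∑ i ∈ Finset.Icc 1 (n - 1),
          (U i ω * Z (i + 1) ω - η * (U i ω) ^ 2)) ∂μ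
        = Real.exp (-(1 / 2 : ℝ) * ∑ ℓ ∈ Finset.Icc 1 (n - 1),
            Real.log (1 - 2 * σ ^ 2 * alphaSeq a σ η s ℓ)) ∧
      ∫ ω, Real.exp (s * ∑ i ∈ Finset.Icc 1 (n - 1),
          (U i ω * Z (i + 1) ω - η * (U i ω) ^ 2)) ∂μ
        = ∏ ℓ ∈ Finset.Icc 1 (n - 1),
            (1 - 2 * σ ^ 2 * alphaSeq a σ η s ℓ) ^ (-(1 / 2 : ℝ)) :=
  statement2_general μ a σ hσ Z hZmeas hZindep hZlaw U hU0 hU η n s hs
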